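/- Relative-error subgradient bound at an HCISTA iterate (Eqs. (s12) and (new_eq1)–(new_eq2) in the proof of Theorem 2). Let λ > 0, δ ∈ (1/4, 1/2), t with 1/(4δ‖A‖₂²) ≤ t ≤ 1/‖A‖₂², and η_c ≥ 0. Let x ∈ ℝ^N, v = S_{λt}(x − t∇f(x)) with v ≠ x, and let u ∈ ℝ^N satisfy ‖u − x‖₂ ≤ η_c·‖v − x‖₂. Set w = S_{λt}(u − t∇f(u)), let α satisfy ‖u − x‖₂²/(‖u − x‖₂² + (1 − 2tδ‖A‖₂²)‖v − x‖₂²) ≤ α < 1, and x⁺ = αv + (1 − α)w. Then there exists a subgradient s of F_λ at x⁺ with ‖s‖₂ ≤ 3·(1 + (1 + 3η_c)(2 + √2))·‖A‖₂²·‖x⁺ − x‖₂ + 2√N·λ. -/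
import Mathlib


/-- The Euclidean (ℓ²) norm on `Fin n → ℝ`. -/
noncomputable def l2norm {n : ℕ} (x : Fin n → ℝ) : ℝ := Real.sqrt (∑ i, (x i) ^ 2)

/-- The ℓ¹ norm on `Fin n → ℝ`. -/
noncomputable def l1norm {n : ℕ} (x : Fin n → ℝ) : ℝ := ∑ i, |x i|

/-- The operator norm ‖A‖₂ of a matrix with respect to Euclidean norms. -/
noncomputable def opNorm {m n : ℕ} (A : Matrix (Fin m) (Fin n) ℝ) : ℝ :=
  sSup {c : ℝ | ∃ x : Fin n → ℝ, l2norm x ≤ 1 ∧ c = l2norm (A.mulVec x)}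

/-- Componentwise soft-thresholding: `S_θ(z)ᵢ = sgn(zᵢ) * max (|zᵢ| - θ) 0`. -/
noncomputable def soft {n : ℕ} (θ : ℝ) (z : Fin n → ℝ) : Fin n → ℝ :=
  fun i => Real.sign (z i) * max (|z i| - θ) 0

/-- Gradient of `f(x) = (1/2)‖Ax - b‖₂²`, namely `Aᵀ(Ax - b)`. -/
def gradf {m n : ℕ} (A : Matrix (Fin m) (Fin n) ℝ) (b : Fin m → ℝ) (x : Fin n → ℝ) :
    Fin n → ℝ :=
  A.transpose.mulVec (A.mulVec x - b)

/-- The Lasso objective `F_λ(x) = (1/2)‖Ax - b‖₂² + λ‖x‖₁`. -/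
noncomputable def Flasso {m n : ℕ} (A : Matrix (Fin m) (Fin n) ℝ) (b : Fin m → ℝ)
    (lam : ℝ) (x : Fin n → ℝ) : ℝ :=
  (1 / 2) * (l2norm (A.mulVec x - b)) ^ 2 + lam * l1norm x

/-- `s` is a subgradient of the convex function `φ` at the point `z`:
`φ(y) ≥ φ(z) + ⟨s, y - z⟩` for all `y`. -/
def IsSubgradient {n : ℕ} (φ : (Fin n → ℝ) → ℝ) (s z : Fin n → ℝ) : Prop :=
  ∀ y : Fin n → ℝ, φ z + ∑ i, s i * (y i - z i) ≤ φ y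

set_option maxHeartbeats 4000000

open Finset

/- ### ℓ² norm basics -/

lemma l2norm_eq_norm {n : ℕ} (x : Fin n → ℝ) :
    l2norm x = ‖(WithLp.linearEquiv 2 ℝ (Fin n → ℝ)).symm x‖ := by
  rw [EuclideanSpace.norm_eq]
  simp [l2norm, sq_abs]

lemma l2norm_nonneg {n : ℕ} (x : Fin n → ℝ) : 0 ≤ l2norm x := Real.sqrt_nonneg _

lemma l2norm_sq {n : ℕ} (x : Fin n → ℝ) : (l2norm x) ^ 2 = ∑ i, (x i) ^ 2 :=
  Real.sq_sqrt (Finset.sum_nonneg fun _ _ => sq_nonneg _)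

lemma l2norm_add_le {n : ℕ} (x y : Fin n → ℝ) :
    l2norm (x + y) ≤ l2norm x + l2norm y := by
  simp only [l2norm_eq_norm, map_add]
  exact norm_add_le _ _

lemma l2norm_smul {n : ℕ} (c : ℝ) (x : Fin n → ℝ) : l2norm (c • x) = |c| * l2norm x := by
  simp only [l2norm_eq_norm, map_smul, norm_smul, Real.norm_eq_abs]

lemma l2norm_sub_comm {n : ℕ} (x y : Fin n → ℝ) : l2norm (x - y) = l2norm (y - x) := by
  simp only [l2norm_eq_norm, map_sub]
  exact norm_sub_rev _ _

lemma l2norm_sub_le {n : ℕ} (x y : Fin n → ℝ) :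
    l2norm (x - y) ≤ l2norm x + l2norm y := by
  simp only [l2norm_eq_norm, map_sub]
  exact norm_sub_le _ _

lemma l2norm_eq_zero_iff {n : ℕ} (x : Fin n → ℝ) : l2norm x = 0 ↔ x = 0 := by
  rw [l2norm_eq_norm, norm_eq_zero]
  exact ⟨fun h => by simpa using congrArg (WithLp.linearEquiv 2 ℝ (Fin n → ℝ)) h,
    fun h => by simp [h]⟩

lemma l2norm_pos {n : ℕ} {x : Fin n → ℝ} (h : x ≠ 0) : 0 < l2norm x :=
  lt_of_le_of_ne (l2norm_nonneg x) fun h' => h ((l2norm_eq_zero_iff x).mp h'.symm)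

lemma l2norm_zero {n : ℕ} : l2norm (0 : Fin n → ℝ) = 0 := by simp [l2norm]

lemma cauchy_schwarz {n : ℕ} (x y : Fin n → ℝ) :
    ∑ i, x i * y i ≤ l2norm x * l2norm y := by
  have h := sum_mul_sq_le_sq_mul_sq Finset.univ x y
  have h2 : (l2norm x * l2norm y) ^ 2 = (∑ i, x i ^ 2) * ∑ i, y i ^ 2 := by
    rw [mul_pow, l2norm_sq, l2norm_sq]
  have hnn : 0 ≤ l2norm x * l2norm y := mul_nonneg (l2norm_nonneg x) (l2norm_nonneg y)
  nlinarith [abs_nonneg (∑ i, x i * y i), le_abs_self (∑ i, x i * y i)]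

lemma l2norm_le_of_bound {n : ℕ} (c : ℝ) (hc : 0 ≤ c) (x : Fin n → ℝ)
    (h : ∀ i, |x i| ≤ c) : l2norm x ≤ Real.sqrt n * c := by
  have hs : ∑ i, (x i) ^ 2 ≤ n * c ^ 2 := by
    calc ∑ i, (x i) ^ 2 ≤ ∑ _i : Fin n, c ^ 2 :=
          Finset.sum_le_sum fun i _ => by nlinarith [h i, abs_nonneg (x i), sq_abs (x i)]
      _ = n * c ^ 2 := by simp [mul_comm]
  calc l2norm x ≤ Real.sqrt (n * c ^ 2) := Real.sqrt_le_sqrt hs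
    _ = Real.sqrt n * c := by
        rw [Real.sqrt_mul (Nat.cast_nonneg n), Real.sqrt_sq hc]

/- ### operator norm -/

lemma opNorm_setmem {m n : ℕ} (A : Matrix (Fin m) (Fin n) ℝ) :
    (0:ℝ) ∈ {c : ℝ | ∃ x : Fin n → ℝ, l2norm x ≤ 1 ∧ c = l2norm (A.mulVec x)} :=
  ⟨0, by simp [l2norm_zero], by simp [Matrix.mulVec_zero, l2norm_zero]⟩

lemma opNorm_bdd {m n : ℕ} (A : Matrix (Fin m) (Fin n) ℝ) :
    BddAbove {c : ℝ | ∃ x : Fin n → ℝ, l2norm x ≤ 1 ∧ c = l2norm (A.mulVec x)} := by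
  refine ⟨Real.sqrt (∑ i, ∑ j, A i j ^ 2), ?_⟩
  rintro c ⟨x, hx, rfl⟩
  have hb : ∑ i, (A.mulVec x i) ^ 2 ≤ ∑ i, ∑ j, A i j ^ 2 := by
    refine Finset.sum_le_sum fun i _ => ?_
    have h1 : (A.mulVec x i) ^ 2 ≤ (∑ j, A i j ^ 2) * ∑ j, x j ^ 2 := by
      simpa [Matrix.mulVec, dotProduct] using sum_mul_sq_le_sq_mul_sq Finset.univ (A i) x
    have h2 : ∑ j, x j ^ 2 ≤ 1 := by
      have := l2norm_sq x
      nlinarith [l2norm_nonneg x]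
    nlinarith [Finset.sum_nonneg (fun j (_ : j ∈ Finset.univ) => sq_nonneg (A i j))]
  simpa [l2norm] using Real.sqrt_le_sqrt hb

lemma opNorm_nonneg {m n : ℕ} (A : Matrix (Fin m) (Fin n) ℝ) : 0 ≤ opNorm A :=
  le_csSup (opNorm_bdd A) (opNorm_setmem A)

lemma opNorm_mulVec_le {m n : ℕ} (A : Matrix (Fin m) (Fin n) ℝ) (y : Fin n → ℝ) :
    l2norm (A.mulVec y) ≤ opNorm A * l2norm y := by
  rcases eq_or_ne y 0 with rfl | hy
  · simp [Matrix.mulVec_zero, l2norm_zero]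
  · have hc : 0 < l2norm y := l2norm_pos hy
    have hmem : l2norm (A.mulVec ((l2norm y)⁻¹ • y)) ∈
        {c : ℝ | ∃ x : Fin n → ℝ, l2norm x ≤ 1 ∧ c = l2norm (A.mulVec x)} := by
      refine ⟨(l2norm y)⁻¹ • y, ?_, rfl⟩
      rw [l2norm_smul, abs_of_nonneg (inv_nonneg.mpr hc.le), inv_mul_cancel₀ hc.ne']
    have hle := le_csSup (opNorm_bdd A) hmem
    rw [Matrix.mulVec_smul, l2norm_smul, abs_of_nonneg (inv_nonneg.mpr hc.le)] at hle
    calc l2norm (A.mulVec y) = l2norm y * ((l2norm y)⁻¹ * l2norm (A.mulVec y)) := by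
          field_simp
      _ ≤ l2norm y * opNorm A := mul_le_mul_of_nonneg_left hle hc.le
      _ = opNorm A * l2norm y := mul_comm _ _

lemma opNorm_pos {m n : ℕ} {A : Matrix (Fin m) (Fin n) ℝ} (hA : A ≠ 0) : 0 < opNorm A := by
  have : ∃ i j, A i j ≠ 0 := by
    by_contra h
    push_neg at h
    exact hA (by ext i j; simpa using h i j)
  obtain ⟨i, j, hij⟩ := this
  have hxnorm : l2norm (Pi.single j (1:ℝ)) = 1 := by
    rw [← Real.sqrt_one]
    unfold l2norm
    congr 1
    rw [Finset.sum_eq_single j] <;> simp +contextual [Pi.single_apply]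
  have hmem : l2norm (A.mulVec (Pi.single j (1:ℝ))) ∈
      {c : ℝ | ∃ x : Fin n → ℝ, l2norm x ≤ 1 ∧ c = l2norm (A.mulVec x)} :=
    ⟨_, hxnorm.le, rfl⟩
  have h1 : |A i j| ≤ l2norm (A.mulVec (Pi.single j (1:ℝ))) := by
    have hsl : (A i j) ^ 2 ≤ ∑ k, (A.mulVec (Pi.single j (1:ℝ)) k) ^ 2 := by
      refine le_trans ?_ (Finset.single_le_sum (fun k _ => sq_nonneg _) (Finset.mem_univ i))
      simp [Matrix.mulVec_single]
    calc |A i j| = Real.sqrt ((A i j) ^ 2) := (Real.sqrt_sq_eq_abs _).symm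
      _ ≤ _ := Real.sqrt_le_sqrt hsl
  have := le_csSup (opNorm_bdd A) hmem
  have habs : 0 < |A i j| := abs_pos.mpr hij
  unfold opNorm
  linarith

lemma transpose_dot {m n : ℕ} (A : Matrix (Fin m) (Fin n) ℝ) (r : Fin m → ℝ) (d : Fin n → ℝ) :
    ∑ j, A.transpose.mulVec r j * d j = ∑ i, r i * A.mulVec d i := by
  simp only [Matrix.mulVec, dotProduct, Matrix.transpose_apply, Finset.sum_mul,
    Finset.mul_sum]
  rw [Finset.sum_comm]
  exact Finset.sum_congr rfl fun i _ => Finset.sum_congr rfl fun j _ => by ring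

lemma opNorm_transpose_mulVec_le {m n : ℕ} (A : Matrix (Fin m) (Fin n) ℝ) (y : Fin m → ℝ) :
    l2norm (A.transpose.mulVec y) ≤ opNorm A * l2norm y := by
  set z := A.transpose.mulVec y with hz
  have h1 : (l2norm z) ^ 2 ≤ l2norm y * l2norm (A.mulVec z) := by
    rw [l2norm_sq]
    calc ∑ j, z j ^ 2 = ∑ j, A.transpose.mulVec y j * z j := by
          refine Finset.sum_congr rfl fun j _ => ?_
          rw [← hz]; ring
      _ = ∑ i, y i * A.mulVec z i := transpose_dot A y z
      _ ≤ _ := cauchy_schwarz _ _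
  have h2 : l2norm (A.mulVec z) ≤ opNorm A * l2norm z := opNorm_mulVec_le A z
  rcases eq_or_lt_of_le (l2norm_nonneg z) with h | h
  · rw [← h]; exact mul_nonneg (opNorm_nonneg A) (l2norm_nonneg y)
  · nlinarith [l2norm_nonneg y, opNorm_nonneg A]

lemma gradf_lipschitz {m n : ℕ} (A : Matrix (Fin m) (Fin n) ℝ) (b : Fin m → ℝ)
    (y z : Fin n → ℝ) :
    l2norm (gradf A b y - gradf A b z) ≤ opNorm A ^ 2 * l2norm (y - z) := by
  have hid : gradf A b y - gradf A b z = A.transpose.mulVec (A.mulVec (y - z)) := by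
    unfold gradf
    rw [← Matrix.mulVec_sub, sub_sub_sub_cancel_right, ← Matrix.mulVec_sub]
  rw [hid]
  calc l2norm (A.transpose.mulVec (A.mulVec (y - z)))
      ≤ opNorm A * l2norm (A.mulVec (y - z)) := opNorm_transpose_mulVec_le A _
    _ ≤ opNorm A * (opNorm A * l2norm (y - z)) :=
        mul_le_mul_of_nonneg_left (opNorm_mulVec_le A _) (opNorm_nonneg A)
    _ = opNorm A ^ 2 * l2norm (y - z) := by ring

/- ### soft thresholding -/

lemma soft1_eq (θ a : ℝ) (hθ : 0 ≤ θ) :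
    Real.sign a * max (|a| - θ) 0 = a - max (min a θ) (-θ) := by
  rcases lt_trichotomy a 0 with h | h | h
  · rw [Real.sign_of_neg h, abs_of_neg h, min_eq_left (by linarith)]
    rcases le_total a (-θ) with h2 | h2
    · rw [max_eq_left (by linarith), max_eq_right h2]; ring
    · rw [max_eq_right (by linarith), max_eq_left h2]; ring
  · simp [h, Real.sign_zero, max_eq_left (neg_nonpos.mpr hθ), min_eq_left hθ]
  · rw [Real.sign_of_pos h, abs_of_pos h]
    rcases le_total a θ with h2 | h2
    · rw [max_eq_right (by linarith), min_eq_left h2, max_eq_left (by linarith)]; ring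
    · rw [max_eq_left (by linarith), min_eq_right h2, max_eq_left (by linarith)]; ring

lemma soft1_lipschitz (θ a b : ℝ) (hθ : 0 ≤ θ) :
    |Real.sign a * max (|a| - θ) 0 - Real.sign b * max (|b| - θ) 0| ≤ |a - b| := by
  rw [soft1_eq θ a hθ, soft1_eq θ b hθ]
  rw [abs_sub_le_iff]
  rcases abs_cases (a - b) with ⟨he, _⟩ | ⟨he, _⟩ <;>
    rw [he] <;> constructor <;>
    (simp only [min_def, max_def]; split_ifs <;> linarith)

lemma soft1_residual (θ a : ℝ) (hθ : 0 ≤ θ) :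
    |a - Real.sign a * max (|a| - θ) 0| ≤ θ := by
  rw [soft1_eq θ a hθ]
  rw [show a - (a - max (min a θ) (-θ)) = max (min a θ) (-θ) by ring, abs_le]
  exact ⟨le_max_right _ _, max_le (min_le_right _ _) (by linarith)⟩

lemma soft_lipschitz {n : ℕ} (θ : ℝ) (hθ : 0 ≤ θ) (a c : Fin n → ℝ) :
    l2norm (soft θ a - soft θ c) ≤ l2norm (a - c) := by
  unfold l2norm
  apply Real.sqrt_le_sqrt
  refine Finset.sum_le_sum fun i _ => ?_
  have h := soft1_lipschitz θ (a i) (c i) hθ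
  have h2 := pow_le_pow_left₀ (abs_nonneg _) h 2
  simpa [soft, sq_abs] using h2

lemma soft_residual {n : ℕ} (θ : ℝ) (hθ : 0 ≤ θ) (z : Fin n → ℝ) :
    l2norm (soft θ z - z) ≤ Real.sqrt n * θ := by
  refine l2norm_le_of_bound θ hθ _ fun i => ?_
  rw [Pi.sub_apply, abs_sub_comm]
  exact soft1_residual θ (z i) hθ

/- ### subgradient of the lasso objective -/

lemma abs_subgrad (c y : ℝ) : |c| + Real.sign c * (y - c) ≤ |y| := by
  rcases lt_trichotomy c 0 with h | h | h
  · rw [Real.sign_of_neg h, abs_of_neg h]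
    cases abs_cases y <;> linarith
  · simp [h, abs_nonneg]
  · rw [Real.sign_of_pos h, abs_of_pos h]
    cases abs_cases y <;> linarith

lemma abs_sign_le_one (c : ℝ) : |Real.sign c| ≤ 1 := by
  rcases lt_trichotomy c 0 with h | h | h
  · rw [Real.sign_of_neg h]; norm_num
  · simp [h]
  · rw [Real.sign_of_pos h]; norm_num

lemma lasso_subgrad {m n : ℕ} (A : Matrix (Fin m) (Fin n) ℝ) (b : Fin m → ℝ) (lam : ℝ)
    (hlam : 0 ≤ lam) (p : Fin n → ℝ) :
    IsSubgradient (Flasso A b lam) (gradf A b p + lam • fun i => Real.sign (p i)) p := by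
  intro y
  have hquad : (l2norm (A.mulVec p - b)) ^ 2 + 2 * ∑ j, gradf A b p j * (y j - p j)
      ≤ (l2norm (A.mulVec y - b)) ^ 2 := by
    have hdot : ∑ j, gradf A b p j * (y j - p j)
        = ∑ i, (A.mulVec p - b) i * (A.mulVec (y - p)) i := by
      simpa [gradf] using transpose_dot A (A.mulVec p - b) (y - p)
    have hexp : ∀ i, (A.mulVec y - b) i
        = (A.mulVec p - b) i + (A.mulVec (y - p)) i := by
      intro i
      rw [Matrix.mulVec_sub]
      simp only [Pi.sub_apply]
      ring
    rw [l2norm_sq, l2norm_sq, hdot]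
    calc (∑ i, ((A.mulVec p - b) i) ^ 2) + 2 * ∑ i, (A.mulVec p - b) i * (A.mulVec (y - p)) i
        ≤ (∑ i, ((A.mulVec p - b) i) ^ 2) + 2 * (∑ i, (A.mulVec p - b) i * (A.mulVec (y - p)) i)
          + ∑ i, ((A.mulVec (y - p)) i) ^ 2 := by
          have : 0 ≤ ∑ i, ((A.mulVec (y - p)) i) ^ 2 :=
            Finset.sum_nonneg fun _ _ => sq_nonneg _
          linarith
      _ = ∑ i, (((A.mulVec p - b) i) ^ 2 + 2 * ((A.mulVec p - b) i * (A.mulVec (y - p)) i)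
            + ((A.mulVec (y - p)) i) ^ 2) := by
          rw [Finset.sum_add_distrib, Finset.sum_add_distrib, Finset.mul_sum]
      _ = ∑ i, ((A.mulVec y - b) i) ^ 2 :=
          Finset.sum_congr rfl fun i _ => by rw [hexp i]; ring
  have hl1 : l1norm p + ∑ i, Real.sign (p i) * (y i - p i) ≤ l1norm y := by
    unfold l1norm
    rw [← Finset.sum_add_distrib]
    exact Finset.sum_le_sum fun i _ => abs_subgrad (p i) (y i)
  have hsplit : ∑ i, (gradf A b p + lam • fun i => Real.sign (p i)) i * (y i - p i)
      = (∑ i, gradf A b p i * (y i - p i)) + lam * ∑ i, Real.sign (p i) * (y i - p i) := by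
    rw [Finset.mul_sum, ← Finset.sum_add_distrib]
    refine Finset.sum_congr rfl fun i _ => ?_
    simp [Pi.add_apply]
    ring
  unfold Flasso
  rw [hsplit]
  nlinarith [mul_le_mul_of_nonneg_left hl1 hlam]

/-- Relative-error subgradient bound at an HCISTA iterate (Eqs. (s12), (new_eq1)–(new_eq2)
in the proof of Theorem 2). -/
theorem hcista_subgradient_bound {M N : ℕ} (hM : 0 < M) (hN : 0 < N)
    (A : Matrix (Fin M) (Fin N) ℝ) (hA : A ≠ 0) (b : Fin M → ℝ)
    (lam δ t ηc : ℝ) (hlam : 0 < lam) (hδ1 : 1 / 4 < δ) (hδ2 : δ < 1 / 2)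
    (ht1 : 1 / (4 * δ * (opNorm A) ^ 2) ≤ t) (ht2 : t ≤ 1 / (opNorm A) ^ 2)
    (hηc : 0 ≤ ηc)
    (x u v w xp : Fin N → ℝ)
    (hv : v = soft (lam * t) (x - t • gradf A b x)) (hvx : v ≠ x)
    (hu : l2norm (u - x) ≤ ηc * l2norm (v - x))
    (hw : w = soft (lam * t) (u - t • gradf A b u))
    (α : ℝ)
    (hα1 : (l2norm (u - x)) ^ 2 /
      ((l2norm (u - x)) ^ 2 + (1 - 2 * t * δ * (opNorm A) ^ 2) * (l2norm (v - x)) ^ 2) ≤ α)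
    (hα2 : α < 1)
    (hxp : xp = α • v + (1 - α) • w) :
    ∃ s : Fin N → ℝ, IsSubgradient (Flasso A b lam) s xp ∧
      l2norm s ≤ 3 * (1 + (1 + 3 * ηc) * (2 + Real.sqrt 2)) * (opNorm A) ^ 2 * l2norm (xp - x)
        + 2 * Real.sqrt N * lam := by
  set L : ℝ := opNorm A ^ 2 with hLdef
  have hL : 0 < L := pow_pos (opNorm_pos hA) 2
  have hδ0 : 0 < δ := lt_trans (by norm_num) hδ1
  have h4δL : 0 < 4 * δ * L := by positivity
  have ht0 : 0 < t := lt_of_lt_of_le (by positivity) ht1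
  have htL : t * L ≤ 1 := (le_div_iff₀ hL).mp ht2
  have hinv : t⁻¹ ≤ 4 * δ * L := by
    rw [← one_div]
    calc 1 / t ≤ 1 / (1 / (4 * δ * L)) := one_div_le_one_div_of_le (by positivity) ht1
      _ = 4 * δ * L := one_div_one_div _
  set r : ℝ := l2norm (v - x) with hrdef
  set h : ℝ := l2norm (u - x) with hhdef
  have hr : 0 < r := l2norm_pos (sub_ne_zero.mpr hvx)
  have hh : 0 ≤ h := l2norm_nonneg _
  set β : ℝ := 1 - 2 * t * δ * L with hβdef
  have hβpos : 0 < β := by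
    have : 2 * t * δ * L ≤ 2 * δ := by nlinarith
    have : 2 * δ < 1 := by linarith
    nlinarith
  have hβhalf : β ≤ 1 / 2 := by
    have h1 : 1 ≤ t * (4 * δ * L) := by
      rw [div_le_iff₀ h4δL] at ht1
      linarith
    nlinarith
  set s2 : ℝ := Real.sqrt 2 with hs2def
  have hs2 : s2 ^ 2 = 2 := Real.sq_sqrt (by norm_num)
  have hs2nn : 0 ≤ s2 := Real.sqrt_nonneg _
  have hs2lt : s2 < 2 := by nlinarith
  set sβ : ℝ := Real.sqrt β with hsβdef
  have hsβ : sβ ^ 2 = β := Real.sq_sqrt hβpos.le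
  have hsβnn : 0 ≤ sβ := Real.sqrt_nonneg _
  have hsβle : sβ ≤ s2 / 2 := by
    have h1 : β ≤ (s2 / 2) ^ 2 := by
      rw [div_pow, hs2]; norm_num; linarith
    calc sβ ≤ Real.sqrt ((s2 / 2) ^ 2) := Real.sqrt_le_sqrt h1
      _ = s2 / 2 := Real.sqrt_sq (by positivity)
  set P : ℝ := l2norm (xp - x) with hPdef
  have hP : 0 ≤ P := l2norm_nonneg _
  have hθ : 0 ≤ lam * t := by positivity
  -- step 1 : ‖w - v‖ ≤ 2h
  have hwv : l2norm (w - v) ≤ 2 * h := by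
    rw [hw, hv]
    calc l2norm (soft (lam * t) (u - t • gradf A b u) - soft (lam * t) (x - t • gradf A b x))
        ≤ l2norm ((u - t • gradf A b u) - (x - t • gradf A b x)) := soft_lipschitz _ hθ _ _
      _ = l2norm ((u - x) - t • (gradf A b u - gradf A b x)) := by
          congr 1
          rw [smul_sub]
          abel
      _ ≤ l2norm (u - x) + l2norm (t • (gradf A b u - gradf A b x)) := l2norm_sub_le _ _
      _ ≤ h + t * (L * h) := by
          have hg := gradf_lipschitz A b u x
          rw [← hLdef, ← hhdef] at hg
          have hg2 := mul_le_mul_of_nonneg_left hg ht0.le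
          rw [l2norm_smul, abs_of_pos ht0]
          linarith
      _ ≤ 2 * h := by nlinarith
  -- step 2 : r ≤ (2 + √2) P
  have hD : 0 < h ^ 2 + β * r ^ 2 := by positivity
  have hfrac : 1 - α ≤ β * r ^ 2 / (h ^ 2 + β * r ^ 2) := by
    have hsum : h ^ 2 / (h ^ 2 + β * r ^ 2) + β * r ^ 2 / (h ^ 2 + β * r ^ 2) = 1 := by
      field_simp
    linarith
  have h2ah : 2 * (1 - α) * h ≤ sβ * r := by
    have key2 : 2 * β * r ^ 2 * h ≤ sβ * r * (h ^ 2 + β * r ^ 2) := by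
      have e : sβ * r * (h ^ 2 + β * r ^ 2) - 2 * β * r ^ 2 * h = sβ * r * (h - sβ * r) ^ 2 := by
        rw [← hsβ]; ring
      nlinarith [mul_nonneg (mul_nonneg hsβnn hr.le) (sq_nonneg (h - sβ * r)), e]
    have key3 : 2 * (β * r ^ 2 / (h ^ 2 + β * r ^ 2)) * h ≤ sβ * r := by
      rw [show 2 * (β * r ^ 2 / (h ^ 2 + β * r ^ 2)) * h
        = 2 * β * r ^ 2 * h / (h ^ 2 + β * r ^ 2) by ring, div_le_iff₀ hD]
      linarith
    have h1α : 0 ≤ 1 - α := by linarith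
    nlinarith [mul_le_mul_of_nonneg_right hfrac hh]
  have hrP : r ≤ (2 + s2) * P := by
    have hid : v - x = (xp - x) - (1 - α) • (w - v) := by
      rw [hxp]; module
    have hstep : r ≤ P + (1 - α) * (2 * h) := by
      calc r = l2norm ((xp - x) - (1 - α) • (w - v)) := by rw [hrdef, hid]
        _ ≤ l2norm (xp - x) + l2norm ((1 - α) • (w - v)) := l2norm_sub_le _ _
        _ = P + |1 - α| * l2norm (w - v) := by rw [l2norm_smul]
        _ ≤ P + (1 - α) * (2 * h) := by
            rw [abs_of_nonneg (by linarith : (0:ℝ) ≤ 1 - α)]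
            have h1α : 0 ≤ 1 - α := by linarith
            nlinarith
    have hstep2 : r ≤ P + (s2 / 2) * r := by
      have : (1 - α) * (2 * h) = 2 * (1 - α) * h := by ring
      rw [this] at hstep
      have : sβ * r ≤ (s2 / 2) * r := mul_le_mul_of_nonneg_right hsβle hr.le
      linarith
    nlinarith
  -- the subgradient
  refine ⟨gradf A b xp + lam • fun i => Real.sign (xp i), lasso_subgrad A b lam hlam.le xp, ?_⟩
  set g : Fin N → ℝ := fun i => Real.sign (xp i) with hgdef
  set z : Fin N → ℝ := x - t • gradf A b x with hzdef
  have hdecomp : gradf A b xp + lam • g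
      = (gradf A b xp - gradf A b x) + (t⁻¹ • (x - v) + (t⁻¹ • (v - z) + lam • g)) := by
    have h2 : x - v + (v - z) = t • gradf A b x := by
      rw [hzdef]; abel
    have h1 : t⁻¹ • (x - v) + t⁻¹ • (v - z) = gradf A b x := by
      rw [← smul_add, h2, smul_smul, inv_mul_cancel₀ ht0.ne', one_smul]
    calc gradf A b xp + lam • g
        = (gradf A b xp - gradf A b x) + ((t⁻¹ • (x - v) + t⁻¹ • (v - z)) + lam • g) := by
          rw [h1]; abel
      _ = _ := by abel
  have hT1 : l2norm (gradf A b xp - gradf A b x) ≤ L * P := gradf_lipschitz A b xp x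
  have hT2 : l2norm (t⁻¹ • (x - v)) ≤ 2 * L * r := by
    rw [l2norm_smul, abs_of_pos (inv_pos.mpr ht0), l2norm_sub_comm, ← hrdef]
    have h1 : t⁻¹ * r ≤ (4 * δ * L) * r := mul_le_mul_of_nonneg_right hinv hr.le
    have h2 : 0 < (1 - 2 * δ) * (L * r) :=
      mul_pos (by linarith) (mul_pos hL hr)
    nlinarith [h1, h2]
  have hT3 : l2norm (t⁻¹ • (v - z)) ≤ Real.sqrt N * lam := by
    rw [l2norm_smul, abs_of_pos (inv_pos.mpr ht0)]
    have hres : l2norm (v - z) ≤ Real.sqrt N * (lam * t) := by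
      rw [hv]
      exact soft_residual _ hθ z
    calc t⁻¹ * l2norm (v - z) ≤ t⁻¹ * (Real.sqrt N * (lam * t)) :=
          mul_le_mul_of_nonneg_left hres (by positivity)
      _ = Real.sqrt N * lam := by field_simp
  have hT4 : l2norm (lam • g) ≤ Real.sqrt N * lam := by
    rw [l2norm_smul, abs_of_pos hlam]
    have hgb : l2norm g ≤ Real.sqrt N * 1 :=
      l2norm_le_of_bound 1 zero_le_one g fun i => abs_sign_le_one _
    calc lam * l2norm g ≤ lam * (Real.sqrt N * 1) := mul_le_mul_of_nonneg_left hgb hlam.le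
      _ = Real.sqrt N * lam := by ring
  have htotal : l2norm (gradf A b xp + lam • g)
      ≤ L * P + (2 * L * r + (Real.sqrt N * lam + Real.sqrt N * lam)) := by
    rw [hdecomp]
    calc l2norm ((gradf A b xp - gradf A b x) + (t⁻¹ • (x - v) + (t⁻¹ • (v - z) + lam • g)))
        ≤ l2norm (gradf A b xp - gradf A b x)
          + l2norm (t⁻¹ • (x - v) + (t⁻¹ • (v - z) + lam • g)) := l2norm_add_le _ _
      _ ≤ l2norm (gradf A b xp - gradf A b x)
          + (l2norm (t⁻¹ • (x - v)) + (l2norm (t⁻¹ • (v - z)) + l2norm (lam • g))) := by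
          have := l2norm_add_le (t⁻¹ • (x - v)) (t⁻¹ • (v - z) + lam • g)
          have := l2norm_add_le (t⁻¹ • (v - z)) (lam • g)
          linarith
      _ ≤ _ := add_le_add hT1 (add_le_add hT2 (add_le_add hT3 hT4))
  have hfinal : L * P + (2 * L * r + (Real.sqrt N * lam + Real.sqrt N * lam))
      ≤ 3 * (1 + (1 + 3 * ηc) * (2 + s2)) * L * P + 2 * Real.sqrt N * lam := by
    have hr2 : 2 * L * r ≤ 2 * L * ((2 + s2) * P) := by
      apply mul_le_mul_of_nonneg_left hrP (by positivity)
    have hcoef : 1 + 2 * (2 + s2) ≤ 3 * (1 + (1 + 3 * ηc) * (2 + s2)) := by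
      nlinarith [mul_nonneg hηc hs2nn]
    have hmul : (1 + 2 * (2 + s2)) * (L * P) ≤ (3 * (1 + (1 + 3 * ηc) * (2 + s2))) * (L * P) :=
      mul_le_mul_of_nonneg_right hcoef (mul_nonneg hL.le hP)
    nlinarith [hr2, hmul]
  calc l2norm (gradf A b xp + lam • g) ≤ _ := htotal
    _ ≤ _ := hfinal
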